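/- The pumping lemma for context-free languages: if L is a context-free language, there exists a constant p such that every string s ∈ L with |s| ≥ p can be written s = uvwxy with |vx| ≥ 1, |vwx| ≤ p, and u v^n w x^n y ∈ L for all n ≥ 0. -/

import Mathlib

/-!
Take a parse tree of `s` with the fewest rule applications. A tree of height `h` yields at most
`b ^ h` letters, `b` bounding the lengths of the rules, so if `|s| ≥ b ^ (K + 1)`, with `K` the
number of nonterminals, the tree has a subtree of height exactly `K + 1`. Along a longest path of
that subtree some nonterminal `A` repeats: an `A`-subtree with yield `v w x` contains a proper
`A`-subtree with yield `w`. Grafting the outer one into itself `n` times yields `v^n w x^n`, and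
if `v x` were empty, grafting the inner one in place of the outer one would give a smaller parse
tree of `s`.
-/

/-- `n`-fold repetition (concatenation power) of a list. -/
def listPow {α : Type*} (l : List α) (n : ℕ) : List α :=
  (List.replicate n l).flatten

universe u

lemma listPow_succ {α : Type*} (l : List α) (n : ℕ) : listPow l (n + 1) = l ++ listPow l n := by
  simp [listPow, List.replicate_succ]

lemma listPow_succ' {α : Type*} (l : List α) (n : ℕ) : listPow l (n + 1) = listPow l n ++ l := by
  simp [listPow, List.replicate_succ']

namespace ContextFreeGrammar

variable {T : Type u}

mutual
inductive ParseTree (g : ContextFreeGrammar T) : Symbol T g.NT → List T → Type u where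
  | leaf (a : T) : ParseTree g (.terminal a) [a]
  | node (r : ContextFreeRule T g.NT) (hr : r ∈ g.rules) {w : List T}
      (f : ParseForest g r.output w) : ParseTree g (.nonterminal r.input) w

inductive ParseForest (g : ContextFreeGrammar T) : List (Symbol T g.NT) → List T → Type u where
  | nil : ParseForest g [] []
  | cons {σ : Symbol T g.NT} {w : List T} {σs : List (Symbol T g.NT)} {ws : List T}
      (t : ParseTree g σ w) (f : ParseForest g σs ws) : ParseForest g (σ :: σs) (w ++ ws)
end

variable {g : ContextFreeGrammar T}

mutual
def ParseTree.size : ∀ {σ w}, ParseTree g σ w → ℕ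
  | _, _, .leaf _ => 0
  | _, _, .node _ _ f => f.size + 1

def ParseForest.size : ∀ {σs ws}, ParseForest g σs ws → ℕ
  | _, _, .nil => 0
  | _, _, .cons t f => t.size + f.size
end

mutual
def ParseTree.height : ∀ {σ w}, ParseTree g σ w → ℕ
  | _, _, .leaf _ => 0
  | _, _, .node _ _ f => f.height + 1

def ParseForest.height : ∀ {σs ws}, ParseForest g σs ws → ℕ
  | _, _, .nil => 0
  | _, _, .cons t f => max t.height f.height
end

def ParseTree.cast {σ : Symbol T g.NT} {w w' : List T} (h : w = w') (t : ParseTree g σ w) :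
    ParseTree g σ w' :=
  h ▸ t

@[simp] lemma ParseTree.size_cast {σ : Symbol T g.NT} {w w' : List T} (h : w = w')
    (t : ParseTree g σ w) : (t.cast h).size = t.size := by
  subst h; rfl

def ParseForest.cast {σs : List (Symbol T g.NT)} {ws ws' : List T} (h : ws = ws')
    (f : ParseForest g σs ws) : ParseForest g σs ws' :=
  h ▸ f

@[simp] lemma ParseForest.size_cast {σs : List (Symbol T g.NT)} {ws ws' : List T} (h : ws = ws')
    (f : ParseForest g σs ws) : (f.cast h).size = f.size := by
  subst h; rfl

mutual
theorem ParseTree.derives : ∀ {σ w}, ParseTree g σ w → g.Derives [σ] (w.map .terminal)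
  | _, _, .leaf _ => .refl _
  | _, _, .node r hr f =>
      (Produces.single ⟨r, hr, ContextFreeRule.Rewrites.input_output⟩).trans f.derives

theorem ParseForest.derives : ∀ {σs ws}, ParseForest g σs ws → g.Derives σs (ws.map .terminal)
  | _, _, .nil => .refl _
  | _, _, @ParseForest.cons _ _ _ w σs _ t f => by
      simpa using (t.derives.append_right σs).trans (f.derives.append_left (w.map .terminal))
end

def ParseForest.ofTerminals : ∀ w : List T, ParseForest g (w.map .terminal) w
  | [] => .nil
  | a :: w => .cons (.leaf a) (ofTerminals w)

def ParseForest.append : ∀ {σs ws τs vs},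
    ParseForest g σs ws → ParseForest g τs vs → ParseForest g (σs ++ τs) (ws ++ vs)
  | _, _, _, _, .nil, f' => f'
  | _, _, _, _, .cons t f, f' => (ParseForest.cons t (f.append f')).cast (List.append_assoc ..).symm

lemma ParseForest.exists_split : ∀ (σs : List (Symbol T g.NT)) {τs ws},
    ParseForest g (σs ++ τs) ws →
      ∃ ws₁ ws₂, ws = ws₁ ++ ws₂ ∧ Nonempty (ParseForest g σs ws₁) ∧
        Nonempty (ParseForest g τs ws₂)
  | [], _, _, f => ⟨[], _, rfl, ⟨.nil⟩, ⟨f⟩⟩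
  | σ :: σs, τs, _, f => by
      rw [List.cons_append] at f
      cases f with
      | cons t f =>
        obtain ⟨ws₁, ws₂, rfl, ⟨f₁⟩, ⟨f₂⟩⟩ := exists_split σs f
        exact ⟨_ ++ ws₁, ws₂, (List.append_assoc ..).symm, ⟨.cons t f₁⟩, ⟨f₂⟩⟩

lemma ParseForest.nonempty_of_derives {σs : List (Symbol T g.NT)} {w : List T}
    (h : g.Derives σs (w.map .terminal)) : Nonempty (ParseForest g σs w) := by
  induction h using Relation.ReflTransGen.head_induction_on with
  | refl => exact ⟨ofTerminals w⟩
  | head hstep _ ih =>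
    obtain ⟨r, hr, hrw⟩ := hstep
    obtain ⟨p, q, rfl, rfl⟩ := hrw.exists_parts
    obtain ⟨_, _, rfl, ⟨fpo⟩, ⟨fq⟩⟩ := exists_split (p ++ r.output) ih.some
    obtain ⟨_, wo, rfl, ⟨fp⟩, ⟨fo⟩⟩ := exists_split p fpo
    exact ⟨(fp.append ((ParseForest.cons (.node r hr fo) .nil).cast wo.append_nil)).append fq⟩

lemma ParseTree.nonempty_of_derives {σ : Symbol T g.NT} {w : List T}
    (h : g.Derives [σ] (w.map .terminal)) : Nonempty (ParseTree g σ w) := by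
  obtain ⟨f⟩ := ParseForest.nonempty_of_derives h
  cases f with
  | cons t f => cases f with
    | nil => exact ⟨t.cast (List.append_nil _).symm⟩

-- At least `2`, so that `branching ^ h` is strictly monotone in `h`.
def branching (g : ContextFreeGrammar T) : ℕ :=
  max 2 (g.rules.sup fun r => r.output.length)

lemma two_le_branching : 2 ≤ g.branching := le_max_left _ _

lemma length_output_le_branching {r : ContextFreeRule T g.NT} (hr : r ∈ g.rules) :
    r.output.length ≤ g.branching :=
  le_max_of_le_right (Finset.le_sup (f := fun r => r.output.length) hr)

mutual
theorem ParseTree.length_le_branching_pow :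
    ∀ {σ w} (t : ParseTree g σ w), w.length ≤ g.branching ^ t.height
  | _, _, .leaf _ => by simp [ParseTree.height]
  | _, _, .node r hr f => calc
      _ ≤ r.output.length * g.branching ^ f.height := f.length_le_length_mul_branching_pow
      _ ≤ g.branching * g.branching ^ f.height := by gcongr; exact length_output_le_branching hr
      _ = g.branching ^ (f.height + 1) := by ring

theorem ParseForest.length_le_length_mul_branching_pow :
    ∀ {σs ws} (f : ParseForest g σs ws), ws.length ≤ σs.length * g.branching ^ f.height
  | _, _, .nil => by simp
  | _, _, @ParseForest.cons _ _ _ w σs ws t f => by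
      have hb : 1 ≤ g.branching := le_trans (by norm_num) two_le_branching
      have ht := t.length_le_branching_pow.trans
        (Nat.pow_le_pow_right hb (le_max_left t.height f.height))
      have hf := f.length_le_length_mul_branching_pow.trans
        (Nat.mul_le_mul_left σs.length (Nat.pow_le_pow_right hb (le_max_right t.height f.height)))
      simp only [ParseForest.height, List.length_append, List.length_cons, add_one_mul]
      omega
end

lemma ParseForest.exists_deepest : ∀ {σs ws} (f : ParseForest g σs ws), 0 < f.height →
    ∃ σ u w y, ∃ c : ParseTree g σ w, ws = u ++ w ++ y ∧ c.height = f.height ∧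
      c.size ≤ f.size ∧ ∀ w₁ (c₁ : ParseTree g σ w₁),
        ∃ f' : ParseForest g σs (u ++ w₁ ++ y), f'.size + c.size = f.size + c₁.size
  | _, _, .nil, h => by simp [height] at h
  | _, _, @ParseForest.cons _ _ σ w σs ws t f, h => by
      rcases le_or_gt f.height t.height with hle | hlt
      · refine ⟨σ, [], w, ws, t, by simp, by simp [height, hle], by simp [size], fun _ t₁ => ?_⟩
        exact ⟨.cons t₁ f, by simp only [size]; omega⟩
      · obtain ⟨σ', u, w', y, c, rfl, hc, hsize, graft⟩ := f.exists_deepest (by omega)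
        refine ⟨σ', w ++ u, w', y, c, by simp, by simp [height]; omega, by simp [size]; omega,
          fun w₁ c₁ => ?_⟩
        obtain ⟨f', hf'⟩ := graft w₁ c₁
        exact ⟨(ParseForest.cons t f').cast (by simp), by simp only [size_cast, size]; omega⟩

/-- A position in `t` is recorded only through its context `u, y` and the effect of grafting there:
any `t₁` can replace `t₀`, changing the size by `t₁.size - t₀.size`. -/
def ParseTree.IsSubtree {σ₀ σ : Symbol T g.NT} {w₀ w : List T} (t₀ : ParseTree g σ₀ w₀)
    (t : ParseTree g σ w) (u y : List T) : Prop :=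
  w = u ++ w₀ ++ y ∧ t₀.size ≤ t.size ∧
    ∀ w₁ (t₁ : ParseTree g σ₀ w₁),
      ∃ t' : ParseTree g σ (u ++ w₁ ++ y), t'.size + t₀.size = t.size + t₁.size

def ParseTree.IsSelfNested {σ : Symbol T g.NT} {w : List T} (t : ParseTree g σ w) : Prop :=
  ∃ w₀ v x, ∃ t₀ : ParseTree g σ w₀, t₀.IsSubtree t v x ∧ t₀.size < t.size

namespace ParseTree

variable {σ₀ σ₁ σ : Symbol T g.NT} {w₀ w₁ w : List T}

lemma isSubtree_refl (t : ParseTree g σ w) : t.IsSubtree t [] [] :=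
  ⟨by simp, le_rfl, fun _ t₁ => ⟨t₁.cast (by simp), by simp [add_comm]⟩⟩

lemma IsSubtree.trans {t₀ : ParseTree g σ₀ w₀} {t₁ : ParseTree g σ₁ w₁} {t : ParseTree g σ w}
    {u₀ y₀ u₁ y₁ : List T} (h₀ : t₀.IsSubtree t₁ u₀ y₀) (h₁ : t₁.IsSubtree t u₁ y₁) :
    t₀.IsSubtree t (u₁ ++ u₀) (y₀ ++ y₁) := by
  obtain ⟨rfl, hle₀, graft₀⟩ := h₀
  obtain ⟨rfl, hle₁, graft₁⟩ := h₁
  refine ⟨by simp, hle₀.trans hle₁, fun w₂ t₂ => ?_⟩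
  obtain ⟨t₁', ht₁'⟩ := graft₀ w₂ t₂
  obtain ⟨t', ht'⟩ := graft₁ _ t₁'
  exact ⟨t'.cast (by simp), by simp only [size_cast]; omega⟩

lemma exists_isSubtree_height_add_one (t : ParseTree g σ w) (h : 1 < t.height) :
    ∃ σ' w' u y, ∃ c : ParseTree g σ' w',
      c.IsSubtree t u y ∧ c.height + 1 = t.height ∧ c.size < t.size := by
  cases t with
  | leaf => simp [height] at h
  | node r hr f =>
    have hf : 0 < f.height := by simp only [height] at h; omega
    obtain ⟨σ', u, w', y, c, rfl, hc, hsize, graft⟩ := f.exists_deepest hf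
    refine ⟨σ', w', u, y, c, ⟨rfl, by simp [size]; omega, fun w₁ c₁ => ?_⟩, by simp [height, hc],
      by simp [size]; omega⟩
    obtain ⟨f', hf'⟩ := graft w₁ c₁
    exact ⟨.node r hr f', by simp only [size]; omega⟩

lemma exists_isSubtree_height_eq (t : ParseTree g σ w) {h : ℕ} (hpos : 0 < h)
    (hh : h ≤ t.height) :
    ∃ σ₀ w₀ u y, ∃ t₀ : ParseTree g σ₀ w₀, t₀.IsSubtree t u y ∧ t₀.height = h := by
  obtain ⟨k, hk⟩ := Nat.exists_eq_add_of_le hh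
  induction k generalizing σ w with
  | zero => exact ⟨σ, w, [], [], t, isSubtree_refl t, by omega⟩
  | succ k ih =>
    obtain ⟨σ', w', u, y, c, hc, hheight, -⟩ := t.exists_isSubtree_height_add_one (by omega)
    obtain ⟨σ₀, w₀, u₀, y₀, t₀, h₀, rfl⟩ := ih c (by omega) (by omega)
    exact ⟨σ₀, w₀, _, _, t₀, h₀.trans hc, rfl⟩

lemma input_mem_image [DecidableEq g.NT] {A : g.NT} (t : ParseTree g (.nonterminal A) w) :
    A ∈ g.rules.image (·.input) := by
  cases t with
  | node r hr f => exact Finset.mem_image_of_mem _ hr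

lemma exists_roots_or_isSelfNested [DecidableEq g.NT] (t : ParseTree g σ w) :
    (∃ S : Finset g.NT, S.card = t.height ∧
      ∀ A ∈ S, ∃ w₀ u y, ∃ t₀ : ParseTree g (.nonterminal A) w₀, t₀.IsSubtree t u y) ∨
    ∃ σ₁ w₁ u y, ∃ t₁ : ParseTree g σ₁ w₁, t₁.IsSubtree t u y ∧ t₁.IsSelfNested := by
  generalize hk : t.height = k
  induction k generalizing σ w with
  | zero => exact .inl ⟨∅, rfl, by simp⟩
  | succ k ih =>
    have below : (∃ S : Finset g.NT, S.card = k ∧ ∀ A ∈ S, ∃ w₀ u y,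
        ∃ t₀ : ParseTree g (.nonterminal A) w₀, t₀.IsSubtree t u y ∧ t₀.size < t.size) ∨
        ∃ σ₁ w₁ u y, ∃ t₁ : ParseTree g σ₁ w₁, t₁.IsSubtree t u y ∧ t₁.IsSelfNested := by
      rcases Nat.eq_zero_or_pos k with rfl | hk0
      · exact .inl ⟨∅, rfl, by simp⟩
      obtain ⟨σ', w', u, y, c, hc, hheight, hsize⟩ := t.exists_isSubtree_height_add_one (by omega)
      rcases ih c (by omega) with ⟨S, hS, hroots⟩ | ⟨σ₁, w₁, u₁, y₁, t₁, h₁, hnested⟩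
      · refine .inl ⟨S, hS, fun A hA => ?_⟩
        obtain ⟨w₀, u₀, y₀, t₀, h₀⟩ := hroots A hA
        exact ⟨w₀, _, _, t₀, h₀.trans hc, lt_of_le_of_lt h₀.2.1 hsize⟩
      · exact .inr ⟨σ₁, w₁, _, _, t₁, h₁.trans hc, hnested⟩
    cases t with
    | leaf => simp [height] at hk
    | node r hr f =>
    rcases below with ⟨S, hS, hroots⟩ | hnested
    · by_cases hmem : r.input ∈ S
      · obtain ⟨w₀, u₀, y₀, t₀, h₀, hlt⟩ := hroots _ hmem
        exact .inr ⟨_, _, [], [], _, isSubtree_refl _, ⟨w₀, _, _, t₀, h₀, hlt⟩⟩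
      · refine .inl ⟨insert r.input S, by rw [Finset.card_insert_of_notMem hmem, hS], ?_⟩
        simp only [Finset.mem_insert, forall_eq_or_imp]
        refine ⟨⟨_, [], [], _, isSubtree_refl _⟩, fun A hA => ?_⟩
        obtain ⟨w₀, u₀, y₀, t₀, h₀, -⟩ := hroots A hA
        exact ⟨w₀, _, _, t₀, h₀⟩
    · exact .inr hnested

lemma exists_isSubtree_isSelfNested [DecidableEq g.NT] (t : ParseTree g σ w)
    (h : (g.rules.image (·.input)).card < t.height) :
    ∃ σ₁ w₁ u y, ∃ t₁ : ParseTree g σ₁ w₁, t₁.IsSubtree t u y ∧ t₁.IsSelfNested := by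
  refine t.exists_roots_or_isSelfNested.resolve_left fun ⟨S, hS, hroots⟩ => ?_
  have hsub : S ⊆ g.rules.image (·.input) := fun A hA => by
    obtain ⟨_, _, _, t₀, -⟩ := hroots A hA
    exact t₀.input_mem_image
  have := Finset.card_le_card hsub
  omega

lemma IsSubtree.nonempty_pump {t₀ : ParseTree g σ w₀} {t : ParseTree g σ w} {v x : List T}
    (h : t₀.IsSubtree t v x) (n : ℕ) :
    Nonempty (ParseTree g σ (listPow v n ++ w₀ ++ listPow x n)) := by
  induction n with
  | zero => exact ⟨t₀.cast (by simp [listPow])⟩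
  | succ n ih =>
    obtain ⟨t', -⟩ := h.2.2 _ ih.some
    exact ⟨t'.cast (by rw [listPow_succ, listPow_succ']; simp)⟩

lemma exists_forall_size_le (h : Nonempty (ParseTree g σ w)) :
    ∃ t : ParseTree g σ w, ∀ t' : ParseTree g σ w, t.size ≤ t'.size :=
  ⟨Function.argmin size, fun t' => Function.argmin_le size t'⟩

lemma IsSubtree.append_ne_nil {t₀ : ParseTree g σ₁ w₀} {t₁ : ParseTree g σ₁ w₁}
    {t : ParseTree g σ w} {u y v x : List T} (hmin : ∀ t' : ParseTree g σ w, t.size ≤ t'.size)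
    (h₁ : t₁.IsSubtree t u y) (h₀ : t₀.IsSubtree t₁ v x) (hlt : t₀.size < t₁.size) :
    v ++ x ≠ [] := by
  intro hvx
  obtain ⟨rfl, rfl⟩ := List.append_eq_nil_iff.mp hvx
  obtain ⟨rfl, -, graft⟩ := h₁
  obtain ⟨t', ht'⟩ := graft _ t₀
  have := hmin (t'.cast (by rw [h₀.1]; simp))
  simp only [size_cast] at this
  omega

end ParseTree

end ContextFreeGrammar

open ContextFreeGrammar

/-- **Pumping lemma for context-free languages**: if `L` is context-free, there is a
constant `p` such that every string `s ∈ L` with `|s| ≥ p` can be written as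
`s = u ++ v ++ w ++ x ++ y` with `|v ++ x| ≥ 1`, `|v ++ w ++ x| ≤ p`, and
`u ++ v^n ++ w ++ x^n ++ y ∈ L` for all `n ≥ 0`. -/
theorem pumping_lemma_context_free {T : Type} (L : Language T) (hL : L.IsContextFree) :
    ∃ p : ℕ, ∀ s ∈ L, p ≤ s.length →
      ∃ u v w x y : List T,
        s = u ++ v ++ w ++ x ++ y ∧
        1 ≤ (v ++ x).length ∧
        (v ++ w ++ x).length ≤ p ∧
        ∀ n : ℕ, u ++ listPow v n ++ w ++ listPow x n ++ y ∈ L := by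
  classical
  obtain ⟨g, rfl⟩ := hL
  set K := (g.rules.image (·.input)).card
  refine ⟨g.branching ^ (K + 1), fun s hs hlen => ?_⟩
  obtain ⟨t, hmin⟩ := ParseTree.exists_forall_size_le (ParseTree.nonempty_of_derives hs)
  have hheight : K + 1 ≤ t.height := (Nat.pow_le_pow_iff_right g.two_le_branching).mp
    (hlen.trans t.length_le_branching_pow)
  obtain ⟨_, w₀, u₀, y₀, t₀, h₀, ht₀⟩ := t.exists_isSubtree_height_eq (by omega) hheight
  obtain ⟨_, w₁, u₁, y₁, t₁, h₁, w, v, x, t₂, h₂, hlt⟩ :=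
    t₀.exists_isSubtree_isSelfNested (by omega)
  have hlen₀ := t₀.length_le_branching_pow
  have h₁₀ := h₁.trans h₀
  obtain rfl := h₂.1
  obtain rfl := h₁.1
  refine ⟨u₀ ++ u₁, v, w, x, y₁ ++ y₀, by simpa using h₀.1, ?_, ?_, fun n => ?_⟩
  · exact List.length_pos_iff.mpr (h₁₀.append_ne_nil hmin h₂ hlt)
  · simp only [ht₀, List.length_append] at hlen₀ ⊢
    omega
  · obtain ⟨t'⟩ := h₂.nonempty_pump n
    obtain ⟨t'', -⟩ := h₁₀.2.2 _ t'
    simpa using t''.derives
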